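/- arXiv:0710.1178 — 3 statements merged into one kernel-verified Lean document; each statement's English description precedes it below -/
import Mathlib

section
/- Let $A$ be a commutative ring and let $Q \subseteq I \subseteq J$ be ideals of $A$. Suppose $J = I + (h)$ for some element $h \in A$, and suppose $J^2 = QJ$. Then $I^3 = QI^2$. -/
/-- If `Q ⊆ I ⊆ J` are ideals, `J = I + (h)`, and `J² = QJ`, then `I³ = QI²`. -/
theorem sally_prop_2_6 (A : Type*) [CommRing A] (Q I J : Ideal A)
    (hQI : Q ≤ I) (hIJ : I ≤ J) (h : A) (hJ : J = I ⊔ Ideal.span {h})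
    (hred : J ^ 2 = Q * J) :
    I ^ 3 = Q * I ^ 2 := by
  have hhJ : h ∈ J := by
    rw [hJ]
    exact Ideal.mem_sup_right (Ideal.mem_span_singleton_self h)
  have hsub : J ^ 2 ≤ Q * I ⊔ Q * Ideal.span {h} := by
    rw [hred, hJ, Ideal.mul_sup]
  have hI2 : I ^ 2 ≤ J ^ 2 := by
    rw [sq, sq]; exact Ideal.mul_mono hIJ hIJ
  have hQI2 : Q * I ≤ I ^ 2 := by
    rw [sq]; exact Ideal.mul_mono_left hQI
  have hQQI : Q * (Q * I) ≤ Q * I ^ 2 := Ideal.mul_mono_right hQI2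
  apply le_antisymm
  · rw [pow_succ]
    refine Ideal.mul_le.mpr ?_
    intro u hu z hz
    obtain ⟨m, hm, t, ht, hut⟩ := Submodule.mem_sup.mp (hsub (hI2 hu))
    obtain ⟨a, ha, rfl⟩ := Ideal.mem_mul_span_singleton.mp ht
    have hu' : u = m + a * h := hut.symm
    have hz2 : h * z ∈ Q * I ⊔ Q * Ideal.span {h} :=
      hsub (by rw [sq]; exact Ideal.mul_mem_mul hhJ (hIJ hz))
    obtain ⟨m₂, hm₂, t₂, ht₂, hzt⟩ := Submodule.mem_sup.mp hz2
    obtain ⟨b, hb, rfl⟩ := Ideal.mem_mul_span_singleton.mp ht₂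
    have hz2' : h * z = m₂ + b * h := hzt.symm
    have key : u * z = m * z + a * m₂ + (b * u - b * m) := by
      linear_combination (z - b) * hu' + a * hz2'
    rw [key]
    refine add_mem (add_mem ?_ ?_) (sub_mem ?_ ?_)
    · rw [sq]
      have : m * z ∈ Q * I * I := Ideal.mul_mem_mul hm hz
      rwa [mul_assoc] at this
    · exact hQQI (Ideal.mul_mem_mul ha hm₂)
    · exact Ideal.mul_mem_mul hb hu
    · exact hQQI (Ideal.mul_mem_mul hb hm)
  · calc Q * I ^ 2 ≤ I * I ^ 2 := Ideal.mul_mono_left hQI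
      _ = I ^ 3 := by ring
end

section
/- Let $A$ be a commutative ring, let $b_1, \dots, b_d \in A$ be a regular sequence ($d \geq 2$), and let $Q = (b_1, \dots, b_d)$. If an element $x \in A$ satisfies $b_d^2 x \in (b_1) + (b_2, \dots, b_{d-1})^2$, then $x \in (b_1) + (b_2, \dots, b_{d-1})^2$. -/
/-!
Put `I = (b₁)` and `J = (b₂, …, b_{d-1})`. Since each `bᵢ` is a nonzerodivisor modulo `I` plus
the earlier generators, induction on the number of generators shows that `∑ aᵢ bᵢ ∈ I + J²`
forces every `aᵢ ∈ I + J`. Now let `z = b_d`, a nonzerodivisor modulo `I + J`, with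
`z x ∈ I + J²`. Then `x ∈ I + J`, say `x = c + ∑ aᵢ bᵢ` with `c ∈ I`, so `∑ (z aᵢ) bᵢ ∈ I + J²`,
whence `z aᵢ ∈ I + J`, `aᵢ ∈ I + J` and `x ∈ I + J²`. Hence `b_d`, and so `b_d²`, is a
nonzerodivisor modulo `I + J²`.
-/

open Finset

section CommSemiring

variable {A : Type*} [CommSemiring A]

lemma Ideal.sup_sq_eq (J K : Ideal A) : (J ⊔ K) ^ 2 = J ^ 2 ⊔ K * (J ⊔ K) := by
  have hJK : J * K ≤ K * (J ⊔ K) := mul_comm J K ▸ Ideal.mul_mono_right le_sup_left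
  rw [sq, sq, Ideal.sup_mul, Ideal.mul_sup J, sup_assoc, sup_eq_right.2 hJK]

lemma Ideal.mul_mem_sup_sq {I J : Ideal A} {a b : A} (ha : a ∈ I ⊔ J) (hb : b ∈ J) :
    a * b ∈ I ⊔ J ^ 2 := by
  have : (I ⊔ J) * J ≤ I ⊔ J ^ 2 := by
    rw [Ideal.sup_mul, sq]
    exact sup_le_sup_right Ideal.mul_le_left _
  exact this (Ideal.mul_mem_mul ha hb)

variable (y : ℕ → A)

def prefixSpan (k : ℕ) : Ideal A := Ideal.span (y '' ↑(range k))

lemma prefixSpan_succ (k : ℕ) :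
    prefixSpan y (k + 1) = prefixSpan y k ⊔ Ideal.span {y k} := by
  rw [prefixSpan, prefixSpan, range_add_one, coe_insert, Set.image_insert_eq, Ideal.span_insert,
    sup_comm]

lemma span_singleton_sup_prefixSpan_comp_succ (k : ℕ) :
    Ideal.span {y 0} ⊔ prefixSpan (fun i => y (i + 1)) k = prefixSpan y (k + 1) := by
  rw [prefixSpan, prefixSpan, range_add_one', coe_insert, Set.image_insert_eq, Ideal.span_insert,
    coe_map, ← Set.image_comp]
  rfl

lemma apply_mem_prefixSpan {i k : ℕ} (h : i < k) : y i ∈ prefixSpan y k :=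
  Ideal.subset_span ⟨i, mem_range.2 h, rfl⟩

lemma mem_prefixSpan_iff {k : ℕ} {x : A} :
    x ∈ prefixSpan y k ↔ ∃ c : ℕ → A, ∑ i ∈ range k, c i * y i = x :=
  Submodule.mem_span_image_finset_iff_exists_fun' A

lemma ofList_take_map_range {d k : ℕ} (hk : k ≤ d) :
    Ideal.ofList (((List.range d).map y).take k) = prefixSpan y k := by
  rw [← List.map_take, List.take_range, min_eq_left hk, Ideal.ofList, prefixSpan]
  congr 1
  ext r
  simp

end CommSemiring

namespace RingTheory.Sequence.IsWeaklyRegular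

variable {A : Type*} [CommRing A] {y : ℕ → A} {d : ℕ}

lemma isSMulRegular_quotient_prefixSpan (hy : IsWeaklyRegular A ((List.range d).map y)) {k : ℕ}
    (hk : k < d) :
    IsSMulRegular (A ⧸ prefixSpan y k) (y k) := by
  have := hy.regular_mod_prev k (by simpa using hk)
  rwa [ofList_take_map_range y hk.le, smul_eq_mul, Ideal.mul_top, List.getElem_map,
    List.getElem_range] at this

lemma isSMulRegular_quotient_span_singleton_sup_prefixSpan
    (hy : IsWeaklyRegular A ((List.range d).map y)) {k : ℕ} (hk : k + 1 < d) :
    IsSMulRegular (A ⧸ (Ideal.span {y 0} ⊔ prefixSpan (fun i => y (i + 1)) k)) (y (k + 1)) := by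
  rw [span_singleton_sup_prefixSpan_comp_succ]
  exact hy.isSMulRegular_quotient_prefixSpan hk

end RingTheory.Sequence.IsWeaklyRegular

section QuasiRegular

variable {A : Type*} [CommRing A]

lemma exists_sub_mem_of_add_mul_mem_sup_sq {I J : Ideal A} {y s a : A}
    (hy : IsSMulRegular (A ⧸ (I ⊔ J)) y) (hs : s ∈ J)
    (h : s + y * a ∈ I ⊔ (J ⊔ Ideal.span {y}) ^ 2) :
    ∃ q ∈ J ⊔ Ideal.span {y}, a - q ∈ I ⊔ J ∧ s + y * (a - q) ∈ I ⊔ J ^ 2 := by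
  rw [Ideal.sup_sq_eq, ← sup_assoc] at h
  obtain ⟨p, hp, w, hw, hpw⟩ := Submodule.mem_sup.1 h
  obtain ⟨q, hq, rfl⟩ := Ideal.mem_span_singleton_mul.1 hw
  have hsq : s + y * (a - q) = p := by linear_combination -hpw
  refine ⟨q, hq, mem_of_isSMulRegular_quotient_of_smul_mem hy ?_, hsq ▸ hp⟩
  have hyaq : y * (a - q) = p - s := by linear_combination hsq
  rw [smul_eq_mul, hyaq]
  exact sub_mem (sup_le_sup_left (Ideal.pow_le_self two_ne_zero) I hp) (Ideal.mem_sup_right hs)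

lemma exists_sum_add_mul_mem_sup_prefixSpan_sq {I : Ideal A} {y a : ℕ → A} {m : ℕ} {z r : A}
    (hr : r ∈ I ⊔ prefixSpan y m)
    (h : ∑ i ∈ range m, a i * y i + z * r ∈ I ⊔ prefixSpan y m ^ 2) :
    ∃ e : ℕ → A, ∑ i ∈ range m, (a i + z * e i) * y i ∈ I ⊔ prefixSpan y m ^ 2 := by
  obtain ⟨c, hc, t, ht, rfl⟩ := Submodule.mem_sup.1 hr
  obtain ⟨e, rfl⟩ := (mem_prefixSpan_iff y).1 ht
  refine ⟨e, ?_⟩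
  have : ∑ i ∈ range m, (a i + z * e i) * y i =
      ∑ i ∈ range m, a i * y i + z * (c + ∑ i ∈ range m, e i * y i) - z * c := by
    simp only [add_mul, sum_add_distrib, mul_add, mul_sum, mul_assoc]
    ring
  rw [this]
  exact sub_mem h (Ideal.mem_sup_left (Ideal.mul_mem_left _ _ hc))

theorem coeff_mem_of_sum_mem_sup_prefixSpan_sq {I : Ideal A} {y : ℕ → A} {m : ℕ}
    (hy : ∀ k < m, IsSMulRegular (A ⧸ (I ⊔ prefixSpan y k)) (y k)) (a : ℕ → A)
    (h : ∑ i ∈ range m, a i * y i ∈ I ⊔ prefixSpan y m ^ 2) {i : ℕ} (hi : i < m) :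
    a i ∈ I ⊔ prefixSpan y m := by
  induction m generalizing a i with
  | zero => exact absurd hi (Nat.not_lt_zero i)
  | succ m ih =>
    rw [sum_range_succ, mul_comm (a m), prefixSpan_succ] at h
    have hs : ∑ j ∈ range m, a j * y j ∈ prefixSpan y m :=
      sum_mem fun j hj => Ideal.mul_mem_left _ _ (apply_mem_prefixSpan y (mem_range.1 hj))
    obtain ⟨q, hq, hr, hsum⟩ := exists_sub_mem_of_add_mul_mem_sup_sq (hy m m.lt_add_one) hs h
    obtain ⟨e, he⟩ := exists_sum_add_mul_mem_sup_prefixSpan_sq hr hsum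
    have hmono : I ⊔ prefixSpan y m ≤ I ⊔ prefixSpan y (m + 1) :=
      sup_le_sup_left (prefixSpan_succ y m ▸ le_sup_left) I
    rcases Nat.lt_succ_iff_lt_or_eq.1 hi with hi | rfl
    · have hae := hmono (ih (fun k hk => hy k (hk.trans m.lt_add_one)) _ he hi)
      have hye : y m * e i ∈ I ⊔ prefixSpan y (m + 1) :=
        Ideal.mem_sup_right (Ideal.mul_mem_right _ _ (apply_mem_prefixSpan y m.lt_add_one))
      simpa using sub_mem hae hye
    · rw [← prefixSpan_succ] at hq
      simpa using add_mem (hmono hr) (Ideal.mem_sup_right hq)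

theorem isSMulRegular_quotient_sup_prefixSpan_sq {I : Ideal A} {y : ℕ → A} {m : ℕ} {z : A}
    (hy : ∀ k < m, IsSMulRegular (A ⧸ (I ⊔ prefixSpan y k)) (y k))
    (hz : IsSMulRegular (A ⧸ (I ⊔ prefixSpan y m)) z) :
    IsSMulRegular (A ⧸ (I ⊔ prefixSpan y m ^ 2)) z := by
  rw [isSMulRegular_quotient_iff_mem_of_smul_mem]
  intro x hx
  have hle : I ⊔ prefixSpan y m ^ 2 ≤ I ⊔ prefixSpan y m :=
    sup_le_sup_left (Ideal.pow_le_self two_ne_zero) I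
  obtain ⟨c, hc, t, ht, rfl⟩ :=
    Submodule.mem_sup.1 (mem_of_isSMulRegular_quotient_of_smul_mem hz (hle hx))
  obtain ⟨a, rfl⟩ := (mem_prefixSpan_iff y).1 ht
  have hsum : ∑ i ∈ range m, (z * a i) * y i ∈ I ⊔ prefixSpan y m ^ 2 := by
    have : ∑ i ∈ range m, (z * a i) * y i = z • (c + ∑ i ∈ range m, a i * y i) - z * c := by
      simp only [smul_eq_mul, mul_add, mul_sum, mul_assoc]
      ring
    rw [this]
    exact sub_mem hx (Ideal.mem_sup_left (Ideal.mul_mem_left _ _ hc))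
  refine add_mem (Ideal.mem_sup_left hc) (sum_mem fun i hi => Ideal.mul_mem_sup_sq ?_
    (apply_mem_prefixSpan y (mem_range.1 hi)))
  exact mem_of_isSMulRegular_quotient_of_smul_mem hz
    (coeff_mem_of_sum_mem_sup_prefixSpan_sq hy _ hsum (mem_range.1 hi))

end QuasiRegular

section FinToNat

variable {α : Type*} {d : ℕ} {b : Fin d → α} {f : ℕ → α}

lemma List.ofFn_eq_map_range (hf : ∀ i (h : i < d), f i = b ⟨i, h⟩) :
    List.ofFn b = (List.range d).map f :=
  List.ext_getElem (by simp) fun i hi _ => by simpa using (hf i (by simpa using hi)).symm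

lemma image_setOf_one_le_lt_succ (hf : ∀ i (h : i < d), f i = b ⟨i, h⟩) {n : ℕ}
    (hn : n < d) :
    b '' {i : Fin d | 1 ≤ (i : ℕ) ∧ (i : ℕ) < n + 1} = (fun i => f (i + 1)) '' ↑(range n) := by
  ext r
  simp only [Set.mem_image, Set.mem_ofPred_eq, coe_range, Set.mem_Iio]
  constructor
  · rintro ⟨i, ⟨h1, h2⟩, rfl⟩
    refine ⟨i - 1, by omega, ?_⟩
    rw [hf (i - 1 + 1) (by omega)]
    congr 1
    ext
    simp only
    omega
  · rintro ⟨i, hi, rfl⟩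
    exact ⟨⟨i + 1, by omega⟩, ⟨by simp, by simp only; omega⟩, (hf _ _).symm⟩

end FinToNat

/-- If `b₁, …, b_d` is a regular sequence (`d ≥ 2`) and
`b_d² x ∈ (b₁) + (b₂, …, b_{d-1})²`, then `x ∈ (b₁) + (b₂, …, b_{d-1})²`.
Here `b : Fin d → A`, `b 0 = b₁`, …, `b ⟨d-1,_⟩ = b_d`, and the middle ideal is
generated by `b i` for `1 ≤ i ≤ d-2` (i.e. `b₂, …, b_{d-1}`). -/
theorem regular_sequence_colon (A : Type*) [CommRing A] (d : ℕ) (hd : 2 ≤ d)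
    (b : Fin d → A)
    (hreg : RingTheory.Sequence.IsRegular A (List.ofFn b)) (x : A)
    (hx : b ⟨d - 1, by omega⟩ ^ 2 * x ∈
      Ideal.span {b ⟨0, by omega⟩} ⊔
        (Ideal.span (b '' {i : Fin d | 1 ≤ (i : ℕ) ∧ (i : ℕ) < d - 1})) ^ 2) :
    x ∈ Ideal.span {b ⟨0, by omega⟩} ⊔
      (Ideal.span (b '' {i : Fin d | 1 ≤ (i : ℕ) ∧ (i : ℕ) < d - 1})) ^ 2 := by
  obtain ⟨f, hf⟩ : ∃ f : ℕ → A, ∀ i (h : i < d), f i = b ⟨i, h⟩ :=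
    ⟨fun i => if h : i < d then b ⟨i, h⟩ else 0, fun i h => dif_pos h⟩
  have hregf : RingTheory.Sequence.IsWeaklyRegular A ((List.range d).map f) :=
    List.ofFn_eq_map_range hf ▸ hreg.toIsWeaklyRegular
  have hmiddle := image_setOf_one_le_lt_succ hf (n := d - 2) (by omega)
  have hz := hregf.isSMulRegular_quotient_span_singleton_sup_prefixSpan (k := d - 2) (by omega)
  rw [show d - 2 + 1 = d - 1 by omega] at hmiddle hz
  rw [← hf 0 (by omega), hmiddle] at hx ⊢
  rw [← hf (d - 1) (by omega)] at hx
  exact mem_of_isSMulRegular_quotient_of_smul_mem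
    ((isSMulRegular_quotient_sup_prefixSpan_sq (I := Ideal.span {f 0})
      (fun k hk => hregf.isSMulRegular_quotient_span_singleton_sup_prefixSpan (by omega))
      hz).pow 2) hx
end

section
/- Let $(A, \mathfrak{m})$ be a Cohen-Macaulay local ring of dimension $d = 1$ with infinite residue field, $I$ an $\mathfrak{m}$-primary ideal, and $Q = (a)$ a minimal reduction of $I$. If $e_1(I) = e_0(I) - \ell_A(A/I) + 1$, then $I^3 = aI^2$ and $\ell_A(I^2/aI) = 1$. -/
open IsLocalRing

/-- A Noetherian local ring is Cohen–Macaulay of dimension `d` iff its Krull dimension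
is `d` and there is a regular sequence of length `d` in the maximal ideal. -/
def IsCohenMacaulayLocal (A : Type*) [CommRing A] [IsLocalRing A] (d : ℕ) : Prop :=
  ringKrullDim A = d ∧
    ∃ rs : List A, rs.length = d ∧ (∀ x ∈ rs, x ∈ maximalIdeal A) ∧
      RingTheory.Sequence.IsRegular A rs

/-- `I` is primary to the maximal ideal (i.e. `𝔪`-primary). -/
def IsPrimaryToMax (A : Type*) [CommRing A] [IsLocalRing A] (I : Ideal A) : Prop :=
  I ≤ maximalIdeal A ∧ maximalIdeal A ≤ I.radical

/-- The length of a module, as the Krull dimension of its submodule lattice. -/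
noncomputable def moduleLength (A M : Type*) [CommRing A] [AddCommGroup M]
    [Module A M] : WithBot ℕ∞ :=
  Order.krullDim (Submodule A M)

/-!
The generator `x` of the reduction is a nonzerodivisor, since some power of a regular element
of `𝔪` lies in `(x)`. Hence `0 → A/Iⁿ → A/xIⁿ → A/(x) → 0` (the first map is multiplication
by `x`) is exact, and `λₙ = ℓ(I^{n+1}/xIⁿ)` satisfies `λₙ + ℓ(A/I^{n+1}) = ℓ(A/Iⁿ) + ℓ(A/(x))`.
As `λₙ = 0` for large `n`, comparison with the Hilbert polynomial gives `ℓ(A/(x)) = e₀` and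
`∑ₙ λₙ = e₁`. Since `λ₀ = e₀ - ℓ(A/I)`, the hypothesis says `∑_{n ≥ 1} λₙ = 1`, and since
`I^{n+1} = xIⁿ` propagates to all larger `n`, this forces `λ₁ = 1` and `λ₂ = 0`.
-/

theorem IsCohenMacaulayLocal.exists_isSMulRegular {A : Type*} [CommRing A] [IsLocalRing A]
    {d : ℕ} (hA : IsCohenMacaulayLocal A d) (hd : d ≠ 0) :
    ∃ y ∈ maximalIdeal A, IsSMulRegular A y := by
  obtain ⟨-, rs, hlen, hmem, hreg⟩ := hA
  obtain ⟨y, rs, rfl⟩ := List.exists_cons_of_length_pos (by omega : 0 < rs.length)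
  exact ⟨y, hmem y List.mem_cons_self,
    ((RingTheory.Sequence.isRegular_cons_iff A y rs).mp hreg).1⟩

theorem IsSMulRegular.of_mem_radical_span_singleton {A M : Type*} [CommRing A] [AddCommGroup M]
    [Module A M] {x y : A} (hy : IsSMulRegular M y) (h : y ∈ (Ideal.span {x}).radical) :
    IsSMulRegular M x := by
  obtain ⟨k, hk⟩ := h
  obtain ⟨w, hw⟩ := Ideal.mem_span_singleton'.mp hk
  exact IsSMulRegular.of_mul (a := w) (hw ▸ hy.pow k)

theorem Ideal.pow_succ_succ_le_mul {A : Type*} [CommRing A] {I J : Ideal A} {n : ℕ}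
    (h : I ^ (n + 1) ≤ J * I ^ n) : I ^ (n + 2) ≤ J * I ^ (n + 1) :=
  calc I ^ (n + 2) = I ^ (n + 1) * I := pow_succ I (n + 1)
    _ ≤ J * I ^ n * I := Ideal.mul_mono_left h
    _ = J * I ^ (n + 1) := by rw [mul_assoc, ← pow_succ]

theorem Ideal.radical_le_radical_of_pow_le {A : Type*} [CommRing A] {I J : Ideal A} {n : ℕ}
    (hn : n ≠ 0) (h : I ^ n ≤ J) : I.radical ≤ J.radical :=
  Ideal.radical_pow I hn ▸ Ideal.radical_mono h

section Length

open Submodule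

variable {R M : Type*} [Ring R] [AddCommGroup M] [Module R M]

theorem Submodule.length_quotient_eq_add_of_le {N P : Submodule R M} (h : N ≤ P) :
    Module.length R (M ⧸ N) =
      Module.length R (P ⧸ N.comap P.subtype) + Module.length R (M ⧸ P) := by
  refine Module.length_eq_add_of_exact (mapQ _ N P.subtype le_rfl) (factor h) ?_
    (factor_surjective h) ?_
  · rw [← LinearMap.ker_eq_bot, ker_mapQ, mkQ_map_self]
  · rw [LinearMap.exact_iff, factor, ker_mapQ, range_mapQ, range_subtype, comap_id]

theorem Submodule.length_quotient_eq_zero_iff {N P : Submodule R M} :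
    Module.length R (P ⧸ N.comap P.subtype) = 0 ↔ P ≤ N := by
  rw [Module.length_eq_zero_iff, Quotient.subsingleton_iff, comap_subtype_eq_top]

theorem Ideal.comap_mulLeft_span_singleton_mul {A : Type*} [CommRing A] {x : A}
    (hx : IsSMulRegular A x) (J : Ideal A) :
    Submodule.comap (LinearMap.mulLeft A x) (Ideal.span {x} * J) = J := by
  ext z
  simp only [Submodule.mem_comap, LinearMap.mulLeft_apply, Ideal.mem_span_singleton_mul]
  exact ⟨fun ⟨w, hw, hxw⟩ => hx hxw ▸ hw, fun hz => ⟨z, hz, rfl⟩⟩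

theorem Ideal.length_quotient_span_singleton_mul {A : Type*} [CommRing A] {x : A}
    (hx : IsSMulRegular A x) (J : Ideal A) :
    Module.length A (A ⧸ Ideal.span {x} * J) =
      Module.length A (A ⧸ J) + Module.length A (A ⧸ Ideal.span {x}) := by
  have hJ := Ideal.comap_mulLeft_span_singleton_mul hx J
  have hle : Ideal.span {x} * J ≤ Ideal.span {x} := Ideal.mul_le_left
  refine Module.length_eq_add_of_exact (mapQ _ _ (LinearMap.mulLeft A x) hJ.ge) (factor hle) ?_
    (factor_surjective hle) ?_
  · rw [← LinearMap.ker_eq_bot, ker_mapQ, hJ, mkQ_map_self]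
  · have hrange : LinearMap.range (LinearMap.mulLeft A x) = Ideal.span {x} := by
      ext z
      simp [Ideal.mem_span_singleton', mul_comm]
    rw [LinearMap.exact_iff, factor, ker_mapQ, range_mapQ, Submodule.comap_id, hrange]

theorem Ideal.span_singleton_mul_pow_le {A : Type*} [CommRing A] {I : Ideal A} {x : A}
    (hxI : x ∈ I) (n : ℕ) : Ideal.span {x} * I ^ n ≤ I ^ (n + 1) :=
  pow_succ' I n ▸ Ideal.mul_mono_left ((Ideal.span_singleton_le_iff_mem I).mpr hxI)

theorem Ideal.length_quotient_pow_add {A : Type*} [CommRing A] {I : Ideal A} {x : A}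
    (hx : IsSMulRegular A x) (hxI : x ∈ I) (n : ℕ) :
    Module.length A (↥(I ^ (n + 1)) ⧸
        Submodule.comap (I ^ (n + 1)).subtype (Ideal.span {x} * I ^ n)) +
        Module.length A (A ⧸ I ^ (n + 1)) =
      Module.length A (A ⧸ I ^ n) + Module.length A (A ⧸ Ideal.span {x}) := by
  rw [← length_quotient_eq_add_of_le (Ideal.span_singleton_mul_pow_le hxI n),
    length_quotient_span_singleton_mul hx]

theorem Ideal.exists_length_recurrence {A : Type*} [CommRing A] {I : Ideal A} {x : A}
    (hx : IsSMulRegular A x) (hxI : x ∈ I) {H : ℕ → ℕ}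
    (hH : ∀ n, Module.length A (A ⧸ I ^ (n + 1)) = H n) {c : ℕ}
    (hc : Module.length A (A ⧸ Ideal.span {x}) = c) :
    ∃ v : ℕ → ℕ, (∀ n, Module.length A (↥(I ^ (n + 1)) ⧸
        Submodule.comap (I ^ (n + 1)).subtype (Ideal.span {x} * I ^ n)) = v n) ∧
      v 0 + H 0 = c ∧ ∀ n, v (n + 1) + H (n + 1) = H n + c := by
  have hlen := Ideal.length_quotient_pow_add hx hxI
  have hfin : ∀ n, Module.length A (A ⧸ I ^ n) ≠ ⊤
    | 0 => by simp [Ideal.one_eq_top]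
    | n + 1 => hH n ▸ ENat.natCast_ne_top (H n)
  obtain ⟨v, hv⟩ : ∃ v : ℕ → ℕ, ∀ n, Module.length A (↥(I ^ (n + 1)) ⧸
      Submodule.comap (I ^ (n + 1)).subtype (Ideal.span {x} * I ^ n)) = v n := by
    refine ⟨fun n => (Module.length A _).toNat, fun n => (ENat.natCast_toNat ?_).symm⟩
    refine ne_top_of_le_ne_top ?_ ((hlen n).le.trans' le_self_add)
    exact WithTop.add_ne_top.mpr ⟨hfin n, hc ▸ ENat.natCast_ne_top c⟩
  refine ⟨v, hv, ?_, fun n => ?_⟩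
  · have h0 := hlen 0
    rw [hv, hH, hc, pow_zero, Ideal.one_eq_top, Module.length_eq_zero, zero_add] at h0
    exact_mod_cast h0
  · have hn := hlen (n + 1)
    rw [hv, hH, hH, hc] at hn
    exact_mod_cast hn

end Length

section HilbertSequence

open Finset

variable {v H : ℕ → ℕ} {c : ℕ}

theorem add_sum_range_eq_mul (h0 : v 0 + H 0 = c) (hsucc : ∀ n, v (n + 1) + H (n + 1) = H n + c)
    (n : ℕ) : H n + ∑ k ∈ range (n + 1), v k = (n + 1) * c := by
  induction n with
  | zero => simpa [add_comm] using h0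
  | succ n ih =>
    rw [sum_range_succ, add_mul, one_mul]
    linarith [hsucc n]

theorem cast_eq_coeff_zero (hsucc : ∀ n, v (n + 1) + H (n + 1) = H n + c)
    {r : ℕ} (hr : ∀ n ≥ r, v n = 0) {e : ℕ → ℤ} {N : ℕ}
    (hHS : ∀ n ≥ N, (H n : ℤ) = e 0 * (n + 1) - e 1) : (c : ℤ) = e 0 := by
  set n := max N r
  have hstep : (H (n + 1) : ℤ) = H n + c := by
    have := hsucc n
    rw [hr (n + 1) (by omega), zero_add] at this
    exact_mod_cast this
  rw [hHS n (le_max_left N r), hHS (n + 1) (by omega)] at hstep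
  push_cast at hstep
  linarith

theorem sum_range_eq_coeff_one (h0 : v 0 + H 0 = c)
    (hsucc : ∀ n, v (n + 1) + H (n + 1) = H n + c) {e : ℕ → ℤ} (hc : (c : ℤ) = e 0) {N : ℕ}
    (hHS : ∀ n ≥ N, (H n : ℤ) = e 0 * (n + 1) - e 1) {n : ℕ} (hn : N ≤ n) :
    (∑ k ∈ range (n + 1), v k : ℤ) = e 1 := by
  have h := add_sum_range_eq_mul h0 hsucc n
  zify at h
  rw [hHS n hn, hc] at h
  linarith

theorem eq_zero_of_le_of_eq_zero (hstable : ∀ n, v n = 0 → v (n + 1) = 0) {m n : ℕ}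
    (hm : v m = 0) (hmn : m ≤ n) : v n = 0 := by
  induction n, hmn using Nat.le_induction with
  | base => exact hm
  | succ n _ ih => exact hstable n ih

theorem apply_one_eq_one_and_apply_two_eq_zero_of_sum_eq (hstable : ∀ n, v n = 0 → v (n + 1) = 0) {n : ℕ}
    (hn : 2 ≤ n) (hsum : ∑ k ∈ range (n + 1), v k = v 0 + 1) : v 1 = 1 ∧ v 2 = 0 := by
  rw [sum_range_succ'] at hsum
  have hpos : v 1 ≠ 0 := by
    intro h1
    have : ∑ k ∈ range n, v (k + 1) = 0 :=
      sum_eq_zero fun k _ => eq_zero_of_le_of_eq_zero hstable h1 (by omega)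
    omega
  have hle : v 1 + v 2 ≤ ∑ k ∈ range n, v (k + 1) := by
    simpa [sum_range_succ] using sum_le_sum_of_subset (f := fun k => v (k + 1))
      (range_subset_range.mpr hn)
  omega

theorem apply_one_eq_one_and_apply_two_eq_zero (h0 : v 0 + H 0 = c)
    (hsucc : ∀ n, v (n + 1) + H (n + 1) = H n + c) (hstable : ∀ n, v n = 0 → v (n + 1) = 0)
    {r : ℕ} (hr : v r = 0) {e : ℕ → ℤ} {N : ℕ}
    (hHS : ∀ n ≥ N, (H n : ℤ) = e 0 * (n + 1) - e 1) (he : e 1 = e 0 - H 0 + 1) :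
    v 1 = 1 ∧ v 2 = 0 := by
  have hc := cast_eq_coeff_zero hsucc (fun n hn => eq_zero_of_le_of_eq_zero hstable hr hn) hHS
  have hsum := sum_range_eq_coeff_one h0 hsucc hc hHS (le_max_left N 2)
  refine apply_one_eq_one_and_apply_two_eq_zero_of_sum_eq hstable (le_max_right N 2) ?_
  zify at h0 ⊢
  linarith

end HilbertSequence

theorem moduleLength_eq_length (A M : Type*) [CommRing A] [AddCommGroup M] [Module A M] :
    moduleLength A M = Module.length A M :=
  (Module.coe_length A M).symm

theorem dim_one_case_general (A : Type*) [CommRing A] [IsLocalRing A]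
    (hCM : IsCohenMacaulayLocal A 1)
    (I Q : Ideal A) (hI : IsPrimaryToMax A I)
    (x : A) (hQ : Q = Ideal.span {x}) (hQI : Q ≤ I)
    (hred : ∃ r : ℕ, I ^ (r + 1) = Q * I ^ r)
    (H : ℕ → ℕ)
    (hH : ∀ n : ℕ, moduleLength A (A ⧸ I ^ (n + 1)) = (H n : ℕ∞))
    (e : ℕ → ℤ) (N : ℕ)
    (hHS : ∀ n ≥ N, (H n : ℤ) = e 0 * (n + 1) - e 1)
    (he : e 1 = e 0 - (H 0 : ℤ) + 1) :
    I ^ 3 = Ideal.span {x} * I ^ 2 ∧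
      moduleLength A
        (↥(I ^ 2) ⧸ Submodule.comap (I ^ 2).subtype (Ideal.span {x} * I)) = 1 := by
  subst hQ
  obtain ⟨r, hr⟩ := hred
  have hxI : x ∈ I := hQI (Ideal.mem_span_singleton_self x)
  have hsub : I ^ (r + 1) ≤ Ideal.span {x} := hr ▸ Ideal.mul_le_left
  obtain ⟨y, hym, hy⟩ := hCM.exists_isSMulRegular one_ne_zero
  have hx : IsSMulRegular A x := hy.of_mem_radical_span_singleton
    (hI.2.trans (Ideal.radical_le_radical_of_pow_le r.succ_ne_zero hsub) hym)
  have hH' : ∀ n, Module.length A (A ⧸ I ^ (n + 1)) = H n := fun n => by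
    exact_mod_cast (moduleLength_eq_length A _).symm.trans (hH n)
  have hc : Module.length A (A ⧸ Ideal.span {x}) ≠ ⊤ :=
    ne_top_of_le_ne_top (hH' r ▸ ENat.natCast_ne_top (H r))
      (Module.length_le_of_surjective _ (Submodule.factor_surjective hsub))
  obtain ⟨v, hv, h0, hsucc⟩ :=
    Ideal.exists_length_recurrence hx hxI hH' (ENat.natCast_toNat hc).symm
  have hzero : ∀ n, v n = 0 ↔ I ^ (n + 1) ≤ Ideal.span {x} * I ^ n := fun n => by
    rw [← Submodule.length_quotient_eq_zero_iff, hv, Nat.cast_eq_zero]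
  obtain ⟨h1, h2⟩ := apply_one_eq_one_and_apply_two_eq_zero h0 hsucc
    (fun n hn => (hzero (n + 1)).mpr (Ideal.pow_succ_succ_le_mul ((hzero n).mp hn)))
    ((hzero r).mpr hr.le) hHS he
  refine ⟨((hzero 2).mp h2).antisymm (Ideal.span_singleton_mul_pow_le hxI 2), ?_⟩
  have hv1 := hv 1
  rw [pow_one, h1] at hv1
  rw [moduleLength_eq_length, hv1]
  rfl

/-- Dimension one case: if `e₁ = e₀ - ℓ_A(A/I) + 1` then `I³ = aI²` and
`ℓ_A(I²/aI) = 1`.  Here `H n = ℓ_A(A/I^{n+1})` (so `H 0 = ℓ_A(A/I)`) and the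
Hilbert coefficients `e 0, e 1` are specified by `H n = e₀(n+1) - e₁` for `n ≫ 0`. -/
theorem dim_one_case (A : Type*) [CommRing A] [IsLocalRing A] [IsNoetherianRing A]
    [Infinite (ResidueField A)]
    (hCM : IsCohenMacaulayLocal A 1)
    (I Q : Ideal A) (hI : IsPrimaryToMax A I)
    (x : A) (hQ : Q = Ideal.span {x}) (hQI : Q ≤ I)
    (hred : ∃ r : ℕ, I ^ (r + 1) = Q * I ^ r)
    (H : ℕ → ℕ)
    (hH : ∀ n : ℕ, moduleLength A (A ⧸ I ^ (n + 1)) = (H n : ℕ∞))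
    (e : ℕ → ℤ) (N : ℕ)
    (hHS : ∀ n ≥ N, (H n : ℤ) = e 0 * (n + 1) - e 1)
    (he : e 1 = e 0 - (H 0 : ℤ) + 1) :
    I ^ 3 = Ideal.span {x} * I ^ 2 ∧
      moduleLength A
        (↥(I ^ 2) ⧸ Submodule.comap (I ^ 2).subtype (Ideal.span {x} * I)) = 1 :=
  dim_one_case_general A hCM I Q hI x hQ hQI hred H hH e N hHS he
end
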